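/- arXiv:2308.15408 — 2 statements merged into one kernel-verified Lean document; each statement's English description precedes it below -/
import Mathlib

section
/- Let A, λ ∈ ℝ and let h : ℝ → ℂ be C³. Define u(t,y) = e^{iλ(y + Aλ²t)}·h(y + 3Aλ²t). Then for all (t,y): A^{−1}·∂_t u + ∂_y³ u = e^{iλ(y + Aλ²t)}·( 3iλ·h'' + h''' )(y + 3Aλ²t) (for A ≠ 0; equivalently ∂_t u + A·∂_y³ u = A·e^{iλ(y+Aλ²t)}(3iλ h'' + h''')(y + 3Aλ²t) for all A). -/
/-!
Write `u = e^{c(y + Aλ²t)} h(y + 3Aλ²t)` with `c = iλ`. Differentiating in `y` acts on the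
profile as the twisted derivative `g ↦ c g + g'`, so
`∂_y³ u = e^{…} (c³ h + 3c² h' + 3c h'' + h''')(y + 3Aλ²t)`, while
`∂_t u = e^{…} Aλ² (c h + 3h')(y + 3Aλ²t)`. Since `c² = -λ²`, the terms in `h` and `h'` of
`∂_t u + A ∂_y³ u` cancel, leaving `A e^{…} (3c h'' + h''')`.
-/

open Complex

theorem ContDiff.hasDerivAt_iteratedDeriv {𝕜 F : Type*} [NontriviallyNormedField 𝕜]
    [NormedAddCommGroup F] [NormedSpace 𝕜 F] {n : WithTop ℕ∞} {f : 𝕜 → F} (hf : ContDiff 𝕜 n f)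
    {m : ℕ} (hm : (m : WithTop ℕ∞) < n) (x : 𝕜) :
    HasDerivAt (iteratedDeriv m f) (iteratedDeriv (m + 1) f x) x := by
  rw [iteratedDeriv_succ]
  exact (hf.differentiable_iteratedDeriv m hm x).hasDerivAt

theorem hasDerivAt_cexp_mul_comp {φ : ℝ → ℂ} {ψ : ℝ → ℝ} {g : ℝ → ℂ} {φ' g' : ℂ} {ψ' x : ℝ}
    (c : ℂ) (hφ : HasDerivAt φ φ' x) (hψ : HasDerivAt ψ ψ' x) (hg : HasDerivAt g g' (ψ x)) :
    HasDerivAt (fun x => cexp (c * φ x) * g (ψ x))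
      (cexp (c * φ x) * (c * φ' * g (ψ x) + ψ' * g')) x := by
  have hgψ : HasDerivAt (fun x => g (ψ x)) (ψ' • g') x := hg.scomp x hψ
  exact ((hφ.const_mul c).cexp.mul hgψ).congr_deriv (by rw [real_smul]; ring)

theorem deriv_cexp_mul_comp_add (c b : ℂ) (a : ℝ) {g g' : ℝ → ℂ}
    (hg : ∀ s, HasDerivAt g (g' s) s) :
    deriv (fun x : ℝ => cexp (c * (x + b)) * g (x + a)) =
      fun x : ℝ => cexp (c * (x + b)) * (c * g (x + a) + g' (x + a)) := by
  funext x
  have hφ : HasDerivAt (fun x : ℝ => (x : ℂ) + b) 1 x := (hasDerivAt_id x).ofReal_comp.add_const b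
  exact ((hasDerivAt_cexp_mul_comp c hφ ((hasDerivAt_id' x).add_const a) (hg (x + a))).congr_deriv
    (by rw [ofReal_one]; ring)).deriv

theorem deriv_deriv_deriv_cexp_mul_comp_add (c b : ℂ) (a : ℝ) {g : ℝ → ℂ}
    (hg : ContDiff ℝ 3 g) (y : ℝ) :
    deriv (fun y₁ => deriv (fun y₂ => deriv (fun x : ℝ => cexp (c * (x + b)) * g (x + a)) y₂) y₁) y
      = cexp (c * (y + b)) * (c ^ 3 * g (y + a) + 3 * c ^ 2 * deriv g (y + a) +
          3 * c * iteratedDeriv 2 g (y + a) + iteratedDeriv 3 g (y + a)) := by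
  have hD : ∀ m < 3, ∀ s, HasDerivAt (iteratedDeriv m g) (iteratedDeriv (m + 1) g s) s :=
    fun m hm => hg.hasDerivAt_iteratedDeriv (by exact_mod_cast hm)
  have h0 : ∀ s, HasDerivAt g (deriv g s) s := by
    simpa only [iteratedDeriv_zero, zero_add, iteratedDeriv_one] using hD 0 (by norm_num)
  have h1 : ∀ s, HasDerivAt (deriv g) (iteratedDeriv 2 g s) s := by
    simpa only [iteratedDeriv_one] using hD 1 (by norm_num)
  have h2 : ∀ s, HasDerivAt (iteratedDeriv 2 g) (iteratedDeriv 3 g s) s := hD 2 (by norm_num)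
  have hp₁ : ∀ s, HasDerivAt (fun s => c * g s + deriv g s)
      (c * deriv g s + iteratedDeriv 2 g s) s :=
    fun s => ((h0 s).const_mul c).add (h1 s)
  have hp₂ : ∀ s, HasDerivAt
      (fun s => c * (c * g s + deriv g s) + (c * deriv g s + iteratedDeriv 2 g s))
      (c * (c * deriv g s + iteratedDeriv 2 g s) +
        (c * iteratedDeriv 2 g s + iteratedDeriv 3 g s)) s :=
    fun s => ((hp₁ s).const_mul c).add (((h1 s).const_mul c).add (h2 s))
  have e₁ := deriv_cexp_mul_comp_add c b a h0
  have e₂ := deriv_cexp_mul_comp_add c b a hp₁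
  have e₃ := deriv_cexp_mul_comp_add c b a hp₂
  beta_reduce at e₂ e₃
  simp only [e₁, e₂, e₃]
  ring

/-- Exact error identity for the Airy wave packet
u(t,y) = e^{iλ(y + Aλ²t)} h(y + 3Aλ²t):
∂_t u + A ∂_y³ u = A e^{iλ(y+Aλ²t)} (3iλ h'' + h''')(y + 3Aλ²t). -/
theorem airy_wave_packet_error (A lam : ℝ) (h : ℝ → ℂ) (hh : ContDiff ℝ 3 h)
    (u : ℝ → ℝ → ℂ)
    (hu : ∀ t y, u t y =
      Complex.exp (Complex.I * lam * (y + A * lam ^ 2 * t)) *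
        h (y + 3 * A * lam ^ 2 * t)) :
    ∀ t y : ℝ,
      deriv (fun t' => u t' y) t +
        (A : ℂ) * deriv (fun y₁ => deriv (fun y₂ => deriv (fun y₃ => u t y₃) y₂) y₁) y =
      (A : ℂ) * Complex.exp (Complex.I * lam * (y + A * lam ^ 2 * t)) *
        (3 * Complex.I * lam * iteratedDeriv 2 h (y + 3 * A * lam ^ 2 * t) +
          iteratedDeriv 3 h (y + 3 * A * lam ^ 2 * t)) := by
  intro t y
  have hφ : HasDerivAt (fun t' : ℝ => (y : ℂ) + A * lam ^ 2 * t') (A * lam ^ 2) t := by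
    simpa using ((hasDerivAt_id' t).ofReal_comp.const_mul ((A : ℂ) * lam ^ 2)).const_add (y : ℂ)
  have hψ : HasDerivAt (fun t' : ℝ => y + 3 * A * lam ^ 2 * t') (3 * A * lam ^ 2) t := by
    simpa using ((hasDerivAt_id' t).const_mul (3 * A * lam ^ 2)).const_add y
  have hu_time := hasDerivAt_cexp_mul_comp (I * lam) hφ hψ
    ((hh.differentiable (by norm_num)) _).hasDerivAt
  rw [show (fun t' => u t' y) = _ from funext fun t' => hu t' y, hu_time.deriv,
    show (fun y₃ => u t y₃) = _ from funext (hu t),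
    deriv_deriv_deriv_cexp_mul_comp_add _ _ _ hh]
  push_cast
  linear_combination (A * cexp (I * lam * (y + A * lam ^ 2 * t)) * lam ^ 2 *
    (I * lam * h (y + 3 * A * lam ^ 2 * t) + 3 * deriv h (y + 3 * A * lam ^ 2 * t))) * I_mul_I
end

section
/- Let λ < 0, t ≥ 0, and let a₀ : ℝ → ℂ be continuous with support contained in (−2, −1). Define ψ(t,x) = x^{−1}·e^{iλ(log x − λt)}·a₀(log x − 2λt) for x > 0. Then (∫₀^∞ |x·ψ(t,x)|² dx)^{1/2} ≤ e^{−|λ|t}·(∫_ℝ |a₀(z)|² dz)^{1/2}. -/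
/-!
Multiplying by the weight `x` cancels the factor `x⁻¹` and the phase has modulus one, so
`‖x ψ(t, x)‖ = ‖a₀(log x - 2λt)‖`. Substituting `x = exp y` and translating by `2λt` turns the
weighted norm into `exp (2λt) ∫ exp z ‖a₀ z‖²`, and `exp z ≤ 1` on the support of `a₀`.
-/

open MeasureTheory Real Set

lemma norm_ofReal_mul_inv_mul_exp_I_mul {x : ℝ} (hx : x ≠ 0) (r : ℝ) (w : ℂ) :
    ‖(x : ℂ) * ((x : ℂ)⁻¹ * Complex.exp (Complex.I * r) * w)‖ = ‖w‖ := by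
  rw [← mul_assoc, ← mul_assoc, mul_inv_cancel₀ (Complex.ofReal_ne_zero.mpr hx), one_mul,
    norm_mul, Complex.norm_exp_I_mul_ofReal, one_mul]

lemma integral_Ioi_comp_log {E : Type*} [NormedAddCommGroup E] [NormedSpace ℝ E] (f : ℝ → E) :
    ∫ x in Ioi 0, f (log x) = ∫ y, exp y • f y := by
  rw [← range_exp, ← image_univ, integral_image_eq_integral_abs_deriv_smul MeasurableSet.univ
    (fun y _ => (hasDerivAt_exp y).hasDerivWithinAt) exp_injective.injOn, setIntegral_univ]
  simp only [log_exp, abs_of_pos (exp_pos _)]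

lemma integral_exp_mul_comp_sub (g : ℝ → ℝ) (c : ℝ) :
    ∫ y, exp y * g (y - c) = exp c * ∫ z, exp z * g z := by
  rw [← integral_const_mul, ← integral_add_right_eq_self _ c]
  simp only [add_sub_cancel_right, ← mul_assoc, ← exp_add, add_comm c]

lemma integral_exp_mul_le_of_support_subset_Iic {g : ℝ → ℝ} (hg : Integrable g)
    (hg0 : 0 ≤ g) (hsupp : Function.support g ⊆ Iic 0) :
    ∫ z, exp z * g z ≤ ∫ z, g z := by
  have hle : ∀ z, exp z * g z ≤ g z := by
    intro z
    by_cases hz : g z = 0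
    · simp [hz]
    · exact mul_le_of_le_one_left (hg0 z) (exp_le_one_iff.mpr (hsupp hz))
  exact integral_mono_of_nonneg (.of_forall fun z => mul_nonneg (exp_pos z).le (hg0 z)) hg
    (.of_forall hle)

theorem degenerating_wave_packet_decay_general (lam t : ℝ) (hlam : lam < 0)
    (a₀ : ℝ → ℂ) (ha : Continuous a₀)
    (hs : Function.support a₀ ⊆ Set.Ioo (-2 : ℝ) (-1))
    (ψ : ℝ → ℝ → ℂ)
    (hψ : ∀ t' x : ℝ, ψ t' x = ((x : ℂ))⁻¹ *
      Complex.exp (Complex.I * lam * (Real.log x - lam * t')) *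
        a₀ (Real.log x - 2 * lam * t')) :
    Real.sqrt (∫ x in Set.Ioi (0:ℝ), ‖(x : ℂ) * ψ t x‖ ^ 2) ≤
      Real.exp (-|lam| * t) * Real.sqrt (∫ z : ℝ, ‖a₀ z‖ ^ 2) := by
  set g : ℝ → ℝ := fun z => ‖a₀ z‖ ^ 2
  have hweight : ∀ x ∈ Ioi (0 : ℝ), ‖(x : ℂ) * ψ t x‖ ^ 2 = g (log x - 2 * lam * t) := by
    intro x hx
    rw [hψ, mul_assoc Complex.I, ← Complex.ofReal_mul, ← Complex.ofReal_sub, ← Complex.ofReal_mul,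
      norm_ofReal_mul_inv_mul_exp_I_mul (ne_of_gt hx)]
  have hsupp : Function.support g ⊆ Ioo (-2) (-1) := fun z hz =>
    hs (by simpa [g] using hz)
  have hg : Integrable g := (ha.norm.pow 2).integrable_of_hasCompactSupport
    (HasCompactSupport.of_support_subset_isCompact isCompact_Icc
      (hsupp.trans Ioo_subset_Icc_self))
  have hdecay : ∫ z, exp z * g z ≤ ∫ z, g z :=
    integral_exp_mul_le_of_support_subset_Iic hg (fun z => by positivity)
      fun z hz => (hsupp hz).2.le.trans (by norm_num)
  calc √(∫ x in Ioi (0 : ℝ), ‖(x : ℂ) * ψ t x‖ ^ 2)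
      = √(exp (2 * lam * t) * ∫ z, exp z * g z) := by
        rw [setIntegral_congr_fun measurableSet_Ioi hweight,
          integral_Ioi_comp_log (fun y => g (y - 2 * lam * t)), ← integral_exp_mul_comp_sub]
        simp only [smul_eq_mul]
    _ ≤ √(exp (2 * lam * t) * ∫ z, g z) := by gcongr
    _ = exp (-|lam| * t) * √(∫ z, g z) := by
        rw [sqrt_mul (exp_pos _).le, abs_of_neg hlam, neg_neg,
          show 2 * lam * t = lam * t + lam * t by ring, exp_add, sqrt_mul_self (exp_pos _).le]

/-- Degeneration estimate: with weight |x|, the model wave packet for the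
linearized Hunter–Smothers equation decays exponentially at rate |λ|. -/
theorem degenerating_wave_packet_decay (lam t : ℝ) (hlam : lam < 0) (ht : 0 ≤ t)
    (a₀ : ℝ → ℂ) (ha : Continuous a₀)
    (hs : Function.support a₀ ⊆ Set.Ioo (-2 : ℝ) (-1))
    (ψ : ℝ → ℝ → ℂ)
    (hψ : ∀ t' x : ℝ, ψ t' x = ((x : ℂ))⁻¹ *
      Complex.exp (Complex.I * lam * (Real.log x - lam * t')) *
        a₀ (Real.log x - 2 * lam * t')) :
    Real.sqrt (∫ x in Set.Ioi (0:ℝ), ‖(x : ℂ) * ψ t x‖ ^ 2) ≤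
      Real.exp (-|lam| * t) * Real.sqrt (∫ z : ℝ, ‖a₀ z‖ ^ 2) :=
  degenerating_wave_packet_decay_general lam t hlam a₀ ha hs ψ hψ
end
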